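/- Let D be a linearly connected digraph with exactly two strong components D_1 and D_2, where D_2 is nontrivial, and suppose the sequence {C(D^m)}_{m≥1} converges to a graph G. Define the bipartite graph B_D with parts ZMod κ_1 and ZMod κ_2 as follows: if D_1 is nontrivial, B_D := B_{1,2}; if D_1 is trivial (so κ_1 = 1 and ZMod κ_1 = {0}), then 0 and j ∈ ZMod κ_2 are adjacent in B_D if and only if j = l − 1 in ZMod κ_2 for some l with (0, l) ∈ I(D_{1,2}). Then G is the following graph: (1) two distinct vertices x ∈ U_a^{(1)} and x' ∈ U_{a'}^{(1)} are adjacent in G if and only if a = a' or there exists z ∈ ZMod κ_2 such that both (a, z) and (a', z) are edges of B_D; (2) a vertex x ∈ U_a^{(1)} and a vertex y ∈ U_b^{(2)} are adjacent in G if and only if (a, b) is an edge of B_D; (3) two distinct vertices y ∈ U_b^{(2)} and y' ∈ U_{b'}^{(2)} are adjacent in G if and only if b = b'. -/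

import Mathlib

/-- A digraph: a finite vertex type with an irreflexive arc relation (no loops). -/
structure Digraph' (V : Type*) where
  Adj : V → V → Prop
  irrefl : ∀ v, ¬ Adj v v

namespace Digraph'

variable {V : Type*}

/-- There is a directed walk of length `m` from `x` to `y` in `D`;
i.e. `y` is an `m`-step prey of `x`. -/
def HasWalk (D : Digraph' V) (m : ℕ) (x y : V) : Prop :=
  ∃ f : ℕ → V, f 0 = x ∧ f m = y ∧ ∀ t, t < m → D.Adj (f t) (f (t + 1))

/-- There is a directed walk of length `m` from `x` to `y` staying inside `S`. -/
def HasWalkIn (D : Digraph' V) (S : Set V) (m : ℕ) (x y : V) : Prop :=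
  ∃ f : ℕ → V, f 0 = x ∧ f m = y ∧ (∀ t, t ≤ m → f t ∈ S) ∧
    ∀ t, t < m → D.Adj (f t) (f (t + 1))

/-- The `m`-step competition graph `C(D^m)` of `D`. -/
def compGraph (D : Digraph' V) (m : ℕ) : SimpleGraph V where
  Adj u v := u ≠ v ∧ ∃ z, D.HasWalk m u z ∧ D.HasWalk m v z
  symm := by
    constructor
    rintro u v ⟨hne, z, h1, h2⟩
    exact ⟨hne.symm, z, h2, h1⟩
  loopless := ⟨fun v h => h.1 rfl⟩

/-- The sequence `{C(D^m)}_{m ≥ 1}` converges. -/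
def CompConverges (D : Digraph' V) : Prop :=
  ∃ N : ℕ, 1 ≤ N ∧ ∀ m, N ≤ m → D.compGraph m = D.compGraph N

/-- The sequence `{C(D^m)}_{m ≥ 1}` converges to the graph `G`. -/
def CompConvergesTo (D : Digraph' V) (G : SimpleGraph V) : Prop :=
  ∃ N : ℕ, 1 ≤ N ∧ ∀ m, N ≤ m → D.compGraph m = G

/-- `D` is linearly connected with strong components `Vset 1, …, Vset η`. -/
structure IsLinConn (D : Digraph' V) (η : ℕ) (Vset : ℕ → Set V) : Prop where
  nonempty : ∀ i, 1 ≤ i → i ≤ η → (Vset i).Nonempty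
  cover : ∀ v : V, ∃ i, 1 ≤ i ∧ i ≤ η ∧ v ∈ Vset i
  disjoint' : ∀ i j, 1 ≤ i → i ≤ η → 1 ≤ j → j ≤ η →
      ∀ v : V, v ∈ Vset i → v ∈ Vset j → i = j
  strong : ∀ i, 1 ≤ i → i ≤ η → ∀ x ∈ Vset i, ∀ y ∈ Vset i,
      ∃ m, D.HasWalkIn (Vset i) m x y
  arcs : ∀ x y : V, D.Adj x y → ∃ i, 1 ≤ i ∧
      ((i ≤ η ∧ x ∈ Vset i ∧ y ∈ Vset i) ∨
       (i + 1 ≤ η ∧ x ∈ Vset i ∧ y ∈ Vset (i + 1)))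
  linked : ∀ i, 1 ≤ i → i + 1 ≤ η → ∃ x ∈ Vset i, ∃ y ∈ Vset (i + 1), D.Adj x y

/-- A component with vertex set `S` is trivial if `S` is a singleton. -/
def IsTrivialComp (S : Set V) : Prop := ∃ v : V, S = {v}

/-- `κ` is the index of imprimitivity of the (strong) component with vertex set `S`:
the gcd of the lengths of all closed directed walks inside `S`. -/
def IsImprimIndex (D : Digraph' V) (S : Set V) (κ : ℕ) : Prop :=
  (∀ (x : V) (m : ℕ), x ∈ S → 0 < m → D.HasWalkIn S m x x → κ ∣ m) ∧
  ∀ d : ℕ, (∀ (x : V) (m : ℕ), x ∈ S → 0 < m → D.HasWalkIn S m x x → d ∣ m) → d ∣ κ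

/-- `u` is an imprimitivity labelling on `S`: along any arc inside `S` the label
increases by one.  Its fibers are the sets of imprimitivity. -/
def IsImprimLabelling (D : Digraph' V) (S : Set V) {κ : ℕ} (u : V → ZMod κ) : Prop :=
  ∀ x ∈ S, ∀ y ∈ S, D.Adj x y → u y = u x + 1

/-- `(k, l) ∈ I(D_{p,p+1})`: some arc goes from a vertex of `U_k^{(p)}` to a vertex of
`U_l^{(p+1)}`. -/
def InI (D : Digraph' V) (Vset : ℕ → Set V) {κ : ℕ → ℕ}
    (u : ∀ i : ℕ, V → ZMod (κ i)) (p : ℕ) (k : ZMod (κ p)) (l : ZMod (κ (p + 1))) : Prop :=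
  ∃ x ∈ Vset p, ∃ y ∈ Vset (p + 1), D.Adj x y ∧ u p x = k ∧ u (p + 1) y = l

/-- `(i, j)` is an edge of the bipartite graph `B_{p,p+1}`. -/
def BAdj (D : Digraph' V) (Vset : ℕ → Set V) {κ : ℕ → ℕ}
    (u : ∀ i : ℕ, V → ZMod (κ i)) (p : ℕ) (i : ZMod (κ p)) (j : ZMod (κ (p + 1))) : Prop :=
  ∃ (k : ZMod (κ p)) (l : ZMod (κ (p + 1))) (a : ℤ),
    InI D Vset u p k l ∧ i = k + 1 + (a : ZMod (κ p)) ∧ j = l + (a : ZMod (κ (p + 1)))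

/-- The competition skeleton graph (CS-graph) `PT_D^{(η)}`: vertices are pairs `⟨r, i⟩`
with `i ∈ ZMod (κ r)` (only `1 ≤ r ≤ η` carries edges); `⟨p, i⟩` and `⟨p+1, j⟩` are
adjacent exactly when `i` and `j` are adjacent in `B_{p,p+1}`. -/
def csGraph (D : Digraph' V) (Vset : ℕ → Set V) {κ : ℕ → ℕ}
    (u : ∀ i : ℕ, V → ZMod (κ i)) (η : ℕ) : SimpleGraph ((r : ℕ) × ZMod (κ r)) where
  Adj a b := ∃ p, 1 ≤ p ∧ p + 1 ≤ η ∧ ∃ (i : ZMod (κ p)) (j : ZMod (κ (p + 1))),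
    BAdj D Vset u p i j ∧
    ((a = ⟨p, i⟩ ∧ b = ⟨p + 1, j⟩) ∨ (a = ⟨p + 1, j⟩ ∧ b = ⟨p, i⟩))
  symm := by
    constructor
    rintro a b ⟨p, h1, h2, i, j, hB, hab⟩
    exact ⟨p, h1, h2, i, j, hB,
      hab.elim (fun h => Or.inr ⟨h.2, h.1⟩) (fun h => Or.inl ⟨h.2, h.1⟩)⟩
  loopless := by
    constructor
    rintro a ⟨p, _, _, i, j, _, hab⟩
    rcases hab with ⟨ha, hb⟩ | ⟨ha, hb⟩
    · have h : p = p + 1 := congrArg Sigma.fst (ha.symm.trans hb)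
      omega
    · have h : p + 1 = p := congrArg Sigma.fst (ha.symm.trans hb)
      omega

end Digraph'


/-!
Once `m` is large, `m`-step walks are governed by the imprimitivity labels. Inside a nontrivial
strong component the lengths of closed walks at a vertex form a submonoid of `ℕ` with gcd `κ`,
so it contains every large multiple of `κ`; hence a walk of length `m` from `x` to `z` exists iff
`u z = u x + m`. A walk from `D_1` to `D_2` uses exactly one arc between them, and since the
lengths of its two halves can be prescribed modulo `κ_1 κ_2`, it exists iff
`(u_1 x, u_2 z - m)` is an edge of `B_D`. As `G = C(D^m)` for all large `m`, each adjacency of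
`G` reduces to these label conditions at one such `m`.
-/
open Filter

namespace Digraph'

variable {V : Type*} {D : Digraph' V} {S T : Set V} {m n : ℕ} {x y z : V}

section Walks

lemma hasWalkIn_univ : D.HasWalkIn Set.univ m x y ↔ D.HasWalk m x y := by
  simp [HasWalkIn, HasWalk]

lemma hasWalkIn_zero_iff : D.HasWalkIn S 0 x y ↔ x ∈ S ∧ x = y := by
  constructor
  · rintro ⟨f, rfl, rfl, hS, -⟩
    exact ⟨hS 0 le_rfl, rfl⟩
  · rintro ⟨hx, rfl⟩
    exact ⟨fun _ => x, rfl, rfl, fun _ _ => hx, fun t ht => absurd ht (Nat.not_lt_zero t)⟩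

lemma hasWalkIn_succ_iff :
    D.HasWalkIn S (m + 1) x z ↔ x ∈ S ∧ ∃ y, D.Adj x y ∧ D.HasWalkIn S m y z := by
  constructor
  · rintro ⟨f, rfl, rfl, hS, hadj⟩
    exact ⟨hS 0 (Nat.zero_le _), f 1, hadj 0 m.succ_pos,
      fun t => f (t + 1), rfl, rfl, fun t ht => hS _ (by omega), fun t ht => hadj _ (by omega)⟩
  · rintro ⟨hx, y, hxy, g, rfl, rfl, hS, hadj⟩
    refine ⟨fun | 0 => x | t + 1 => g t, rfl, rfl, ?_, ?_⟩
    · rintro (_ | t) ht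
      exacts [hx, hS t (by omega)]
    · rintro (_ | t) ht
      exacts [hxy, hadj t (by omega)]

lemma hasWalk_zero_iff : D.HasWalk 0 x y ↔ x = y := by
  simp [← hasWalkIn_univ, hasWalkIn_zero_iff]

lemma hasWalk_succ_iff : D.HasWalk (m + 1) x z ↔ ∃ y, D.Adj x y ∧ D.HasWalk m y z := by
  simp [← hasWalkIn_univ, hasWalkIn_succ_iff]

lemma HasWalkIn.start_mem (h : D.HasWalkIn S m x y) : x ∈ S := by
  obtain ⟨f, rfl, -, hS, -⟩ := h
  exact hS 0 (Nat.zero_le m)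

lemma HasWalkIn.end_mem (h : D.HasWalkIn S m x y) : y ∈ S := by
  obtain ⟨f, -, rfl, hS, -⟩ := h
  exact hS m le_rfl

lemma HasWalkIn.mono (hST : S ⊆ T) (h : D.HasWalkIn S m x y) : D.HasWalkIn T m x y := by
  obtain ⟨f, h0, hm, hS, hadj⟩ := h
  exact ⟨f, h0, hm, fun t ht => hST (hS t ht), hadj⟩

lemma HasWalkIn.hasWalk (h : D.HasWalkIn S m x y) : D.HasWalk m x y :=
  hasWalkIn_univ.1 (h.mono (Set.subset_univ S))

lemma HasWalkIn.add (h₁ : D.HasWalkIn S m x y) (h₂ : D.HasWalkIn S n y z) :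
    D.HasWalkIn S (m + n) x z := by
  induction m generalizing x with
  | zero =>
    obtain ⟨-, rfl⟩ := hasWalkIn_zero_iff.1 h₁
    simpa using h₂
  | succ m ih =>
    obtain ⟨hx, w, hxw, hw⟩ := hasWalkIn_succ_iff.1 h₁
    rw [Nat.add_right_comm]
    exact hasWalkIn_succ_iff.2 ⟨hx, w, hxw, ih hw⟩

lemma HasWalk.hasWalkIn_of_forall_adj (hT : ∀ v ∈ T, ∀ w, D.Adj v w → w ∈ T) (hx : x ∈ T)
    (h : D.HasWalk m x y) : D.HasWalkIn T m x y := by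
  induction m generalizing x with
  | zero => exact hasWalkIn_zero_iff.2 ⟨hx, hasWalk_zero_iff.1 h⟩
  | succ m ih =>
    obtain ⟨w, hxw, hw⟩ := hasWalk_succ_iff.1 h
    exact hasWalkIn_succ_iff.2 ⟨hx, w, hxw, ih (hT x hx w hxw) hw⟩

lemma compGraph_adj_iff {v w : V} :
    (D.compGraph m).Adj v w ↔ v ≠ w ∧ ∃ z, D.HasWalk m v z ∧ D.HasWalk m w z :=
  Iff.rfl

lemma CompConvergesTo.eventually_compGraph_eq {G : SimpleGraph V} (hG : D.CompConvergesTo G) :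
    ∀ᶠ m : ℕ in atTop, D.compGraph m = G :=
  let ⟨N, _, hN⟩ := hG
  eventually_atTop.2 ⟨N, hN⟩

end Walks

section StronglyConnected

variable {κ : ℕ} {u : V → ZMod κ}

def StronglyConnectedOn (D : Digraph' V) (S : Set V) : Prop :=
  ∀ x ∈ S, ∀ y ∈ S, ∃ m, D.HasWalkIn S m x y

lemma IsImprimLabelling.eq_add_of_hasWalkIn (hu : D.IsImprimLabelling S u)
    (h : D.HasWalkIn S m x y) : u y = u x + m := by
  induction m generalizing x with
  | zero =>
    obtain ⟨-, rfl⟩ := hasWalkIn_zero_iff.1 h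
    simp
  | succ m ih =>
    obtain ⟨hx, w, hxw, hw⟩ := hasWalkIn_succ_iff.1 h
    rw [ih hw, hu x hx w hw.start_mem hxw]
    push_cast
    ring

lemma IsTrivialComp.eq_of_mem (hS : IsTrivialComp S) (hx : x ∈ S) (hy : y ∈ S) : x = y := by
  obtain ⟨v, rfl⟩ := hS
  exact hx.trans hy.symm

lemma IsTrivialComp.eq_zero_of_hasWalkIn (hS : IsTrivialComp S) (h : D.HasWalkIn S m x y) :
    m = 0 := by
  cases m with
  | zero => rfl
  | succ m =>
    obtain ⟨hx, w, hxw, hw⟩ := hasWalkIn_succ_iff.1 h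
    rw [hS.eq_of_mem hx hw.start_mem] at hxw
    exact absurd hxw (D.irrefl w)

lemma StronglyConnectedOn.exists_adj (hS : D.StronglyConnectedOn S) (hnt : ¬ IsTrivialComp S)
    (hx : x ∈ S) : ∃ y, D.Adj x y ∧ y ∈ S := by
  obtain ⟨y, hy, hyx⟩ : ∃ y ∈ S, y ≠ x := by
    by_contra! h
    exact hnt ⟨x, Set.eq_singleton_iff_unique_mem.2 ⟨hx, h⟩⟩
  obtain ⟨_ | m, h⟩ := hS x hx y hy
  · exact absurd (hasWalkIn_zero_iff.1 h).2 hyx.symm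
  · obtain ⟨-, w, hxw, hw⟩ := hasWalkIn_succ_iff.1 h
    exact ⟨w, hxw, hw.start_mem⟩

lemma StronglyConnectedOn.exists_hasWalkIn (hS : D.StronglyConnectedOn S)
    (hnt : ¬ IsTrivialComp S) (hx : x ∈ S) (n : ℕ) : ∃ y, D.HasWalkIn S n x y := by
  induction n generalizing x with
  | zero => exact ⟨x, hasWalkIn_zero_iff.2 ⟨hx, rfl⟩⟩
  | succ n ih =>
    obtain ⟨w, hxw, hw⟩ := hS.exists_adj hnt hx
    obtain ⟨y, hy⟩ := ih hw
    exact ⟨y, hasWalkIn_succ_iff.2 ⟨hx, w, hxw, hy⟩⟩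

lemma IsImprimIndex.pos (hκ : D.IsImprimIndex S κ) (hS : D.StronglyConnectedOn S)
    (hnt : ¬ IsTrivialComp S) (hx : x ∈ S) : 0 < κ := by
  obtain ⟨y, hxy, hy⟩ := hS.exists_adj hnt hx
  obtain ⟨m, hyx⟩ := hS y hy x hx
  exact Nat.pos_of_dvd_of_pos
    (hκ.1 x (m + 1) hx m.succ_pos (hasWalkIn_succ_iff.2 ⟨hx, y, hxy, hyx⟩)) m.succ_pos

lemma IsImprimLabelling.exists_eq (hu : D.IsImprimLabelling S u) (hS : D.StronglyConnectedOn S)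
    (hnt : ¬ IsTrivialComp S) (hκ : D.IsImprimIndex S κ) (hx : x ∈ S) (c : ZMod κ) :
    ∃ w ∈ S, u w = c := by
  have : NeZero κ := ⟨(hκ.pos hS hnt hx).ne'⟩
  obtain ⟨w, hw⟩ := hS.exists_hasWalkIn hnt hx (c - u x).val
  exact ⟨w, hw.end_mem, by rw [hu.eq_add_of_hasWalkIn hw, ZMod.natCast_zmod_val, add_sub_cancel]⟩

lemma IsImprimIndex.eventually_hasWalkIn_self (hκ : D.IsImprimIndex S κ)
    (hS : D.StronglyConnectedOn S) (hx : x ∈ S) :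
    ∀ᶠ m : ℕ in atTop, κ ∣ m → D.HasWalkIn S m x x := by
  set A := {n | D.HasWalkIn S n x x}
  have hclosure : ∀ n ∈ AddSubmonoid.closure A, n ∈ A := fun n hn =>
    AddSubmonoid.closure_induction (fun _ h => h) (hasWalkIn_zero_iff.2 ⟨hx, rfl⟩)
      (fun _ _ _ _ h₁ h₂ => h₁.add h₂) hn
  have hgcd : Nat.setGcd A ∣ κ := hκ.2 _ fun w n hw _ hwalk => by
    obtain ⟨p, hp⟩ := hS x hx w hw
    obtain ⟨q, hq⟩ := hS w hw x hx
    have h₁ : Nat.setGcd A ∣ p + q := Nat.setGcd_dvd_of_mem (hp.add hq)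
    have h₂ : Nat.setGcd A ∣ p + (n + q) := Nat.setGcd_dvd_of_mem (hp.add (hwalk.add hq))
    rw [Nat.add_comm n q, ← Nat.add_assoc] at h₂
    exact (Nat.dvd_add_right h₁).1 h₂
  obtain ⟨M, hM⟩ := Nat.exists_mem_closure_of_ge A
  exact eventually_atTop.2 ⟨M, fun m hm hdvd => hclosure m (hM m hm (hgcd.trans hdvd))⟩

lemma IsImprimLabelling.eventually_hasWalkIn [Finite V] (hu : D.IsImprimLabelling S u)
    (hS : D.StronglyConnectedOn S) (hκ : D.IsImprimIndex S κ) :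
    ∀ᶠ m : ℕ in atTop, ∀ x ∈ S, ∀ z ∈ S, u z = u x + (m : ZMod κ) → D.HasWalkIn S m x z := by
  refine eventually_all.2 fun x => eventually_imp_distrib_left.2 fun hx =>
    eventually_all.2 fun z => eventually_imp_distrib_left.2 fun hz => ?_
  obtain ⟨p, hp⟩ := hS x hx z hz
  filter_upwards [(tendsto_sub_atTop_nat p).eventually (hκ.eventually_hasWalkIn_self hS hx),
    eventually_ge_atTop p] with m hm hpm hlabel
  have hdvd : κ ∣ m - p := by
    rw [← ZMod.natCast_eq_zero_iff, Nat.cast_sub hpm]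
    linear_combination hu.eq_add_of_hasWalkIn hp - hlabel
  simpa [Nat.sub_add_cancel hpm] using (hm hdvd).add hp

end StronglyConnected

lemma exists_natCast_eq_intCast (L M : ℕ) [NeZero L] (c : ℤ) :
    ∃ s, M ≤ s ∧ s < M + L ∧ ∀ n, n ∣ L → (s : ZMod n) = c := by
  refine ⟨M + ((c - M : ℤ) : ZMod L).val, by omega, by simpa using ZMod.val_lt _, fun n hn => ?_⟩
  have hval : (((c - M : ℤ) : ZMod L).val : ZMod n) = c - M := by
    rw [← map_natCast (ZMod.castHom hn (ZMod n)), ZMod.natCast_zmod_val, map_intCast]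
    push_cast
    ring
  rw [Nat.cast_add, hval]
  ring

namespace IsLinConn

variable {Vs : ℕ → Set V}

lemma mem_one_or_mem_two (hD : D.IsLinConn 2 Vs) (v : V) : v ∈ Vs 1 ∨ v ∈ Vs 2 := by
  obtain ⟨i, hi1, hi2, hv⟩ := hD.cover v
  obtain rfl | rfl : i = 1 ∨ i = 2 := by omega
  exacts [Or.inl hv, Or.inr hv]

lemma not_mem_two_of_mem_one (hD : D.IsLinConn 2 Vs) (hx : x ∈ Vs 1) : x ∉ Vs 2 := fun hx₂ =>
  absurd (hD.disjoint' 1 2 le_rfl one_le_two one_le_two le_rfl x hx hx₂) (by norm_num)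

lemma mem_two_of_adj (hD : D.IsLinConn 2 Vs) (hy : y ∈ Vs 2) (h : D.Adj y z) : z ∈ Vs 2 := by
  obtain ⟨i, hi, ⟨hi2, hyi, hzi⟩ | ⟨hi2, hyi, -⟩⟩ := hD.arcs y z h
  · obtain rfl | rfl : i = 1 ∨ i = 2 := by omega
    exacts [absurd hy (hD.not_mem_two_of_mem_one hyi), hzi]
  · obtain rfl : i = 1 := by omega
    exact absurd hy (hD.not_mem_two_of_mem_one hyi)

lemma hasWalkIn_two (hD : D.IsLinConn 2 Vs) (hy : y ∈ Vs 2) (h : D.HasWalk m y z) :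
    D.HasWalkIn (Vs 2) m y z :=
  h.hasWalkIn_of_forall_adj (fun _ hv _ => hD.mem_two_of_adj hv) hy

lemma hasWalkIn_one (hD : D.IsLinConn 2 Vs) (hx : x ∈ Vs 1) (hz : z ∈ Vs 1)
    (h : D.HasWalk m x z) : D.HasWalkIn (Vs 1) m x z := by
  induction m generalizing x with
  | zero => exact hasWalkIn_zero_iff.2 ⟨hx, hasWalk_zero_iff.1 h⟩
  | succ m ih =>
    obtain ⟨w, hxw, hw⟩ := hasWalk_succ_iff.1 h
    have hw₁ : w ∈ Vs 1 := (hD.mem_one_or_mem_two w).resolve_right fun hw₂ =>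
      hD.not_mem_two_of_mem_one hz (hD.hasWalkIn_two hw₂ hw).end_mem
    exact hasWalkIn_succ_iff.2 ⟨hx, w, hxw, ih hw₁ hw⟩

lemma hasWalk_iff_of_mem_one_of_mem_two (hD : D.IsLinConn 2 Vs) (hx : x ∈ Vs 1)
    (hz : z ∈ Vs 2) :
    D.HasWalk m x z ↔ ∃ s r x' y', s + r + 1 = m ∧ D.HasWalkIn (Vs 1) s x x' ∧ D.Adj x' y' ∧
      y' ∈ Vs 2 ∧ D.HasWalkIn (Vs 2) r y' z := by
  constructor
  · intro h
    induction m generalizing x with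
    | zero =>
      obtain rfl := hasWalk_zero_iff.1 h
      exact absurd hz (hD.not_mem_two_of_mem_one hx)
    | succ m ih =>
      obtain ⟨w, hxw, hw⟩ := hasWalk_succ_iff.1 h
      rcases hD.mem_one_or_mem_two w with hw₁ | hw₂
      · obtain ⟨s, r, x', y', rfl, h₁, hadj, hy', h₂⟩ := ih hw₁ hw
        exact ⟨s + 1, r, x', y', by omega, hasWalkIn_succ_iff.2 ⟨hx, w, hxw, h₁⟩, hadj, hy', h₂⟩
      · exact ⟨0, m, x, w, by omega, hasWalkIn_zero_iff.2 ⟨hx, rfl⟩, hxw, hw₂,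
          hD.hasWalkIn_two hw₂ hw⟩
  · rintro ⟨s, r, x', y', rfl, h₁, hadj, -, h₂⟩
    exact ((h₁.mono (Set.subset_univ _)).add (hasWalkIn_succ_iff.2
      ⟨Set.mem_univ _, y', hadj, h₂.mono (Set.subset_univ _)⟩)).hasWalk

section Labels

variable {κ₁ κ₂ : ℕ} {u₁ : V → ZMod κ₁} {u₂ : V → ZMod κ₂}

lemma eventually_hasWalk_two_iff [Finite V] (hD : D.IsLinConn 2 Vs)
    (hκ : D.IsImprimIndex (Vs 2) κ₂) (hu : D.IsImprimLabelling (Vs 2) u₂) :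
    ∀ᶠ m : ℕ in atTop, ∀ y ∈ Vs 2, ∀ z,
      D.HasWalk m y z ↔ z ∈ Vs 2 ∧ u₂ z = u₂ y + m := by
  filter_upwards [hu.eventually_hasWalkIn (hD.strong 2 one_le_two le_rfl) hκ] with m hm y hy z
  constructor
  · intro h
    have h' := hD.hasWalkIn_two hy h
    exact ⟨h'.end_mem, hu.eq_add_of_hasWalkIn h'⟩
  · rintro ⟨hz, hlabel⟩
    exact (hm y hy z hz hlabel).hasWalk

lemma eventually_hasWalk_one_iff [Finite V] (hD : D.IsLinConn 2 Vs)
    (hκ : D.IsImprimIndex (Vs 1) κ₁) (hu : D.IsImprimLabelling (Vs 1) u₁) :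
    ∀ᶠ m : ℕ in atTop, ∀ x ∈ Vs 1, ∀ z ∈ Vs 1, D.HasWalk m x z ↔ u₁ z = u₁ x + m := by
  filter_upwards [hu.eventually_hasWalkIn (hD.strong 1 le_rfl one_le_two) hκ] with m hm x hx z hz
  exact ⟨fun h => hu.eq_add_of_hasWalkIn (hD.hasWalkIn_one hx hz h),
    fun h => (hm x hx z hz h).hasWalk⟩

end Labels

section Crossing

variable {κ : ℕ → ℕ} {u : ∀ i : ℕ, V → ZMod (κ i)}

lemma bAdj_of_hasWalk (hD : D.IsLinConn 2 Vs) (hu₁ : D.IsImprimLabelling (Vs 1) (u 1))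
    (hu₂ : D.IsImprimLabelling (Vs 2) (u 2)) (hx : x ∈ Vs 1) (hz : z ∈ Vs 2)
    (h : D.HasWalk m x z) : BAdj D Vs u 1 (u 1 x) (u 2 z - m) := by
  obtain ⟨s, r, x', y', rfl, h₁, hadj, hy', h₂⟩ := (hD.hasWalk_iff_of_mem_one_of_mem_two hx hz).1 h
  refine ⟨u 1 x', u 2 y', -(s + 1 : ℕ), ⟨x', h₁.end_mem, y', hy', hadj, rfl, rfl⟩, ?_, ?_⟩
  · rw [hu₁.eq_add_of_hasWalkIn h₁]
    push_cast
    ring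
  · rw [hu₂.eq_add_of_hasWalkIn h₂]
    push_cast
    ring

lemma inI_of_hasWalk (hD : D.IsLinConn 2 Vs) (htriv : IsTrivialComp (Vs 1))
    (hu₂ : D.IsImprimLabelling (Vs 2) (u 2)) (hx : x ∈ Vs 1) (hz : z ∈ Vs 2)
    (h : D.HasWalk m x z) : ∃ l, InI D Vs u 1 (u 1 x) l ∧ u 2 z - m = l - 1 := by
  obtain ⟨s, r, x', y', rfl, h₁, hadj, hy', h₂⟩ := (hD.hasWalk_iff_of_mem_one_of_mem_two hx hz).1 h
  obtain rfl := htriv.eq_zero_of_hasWalkIn h₁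
  obtain ⟨-, rfl⟩ := hasWalkIn_zero_iff.1 h₁
  refine ⟨u 2 y', ⟨x, hx, y', hy', hadj, rfl, rfl⟩, ?_⟩
  rw [hu₂.eq_add_of_hasWalkIn h₂]
  push_cast
  ring

lemma eventually_hasWalk_of_bAdj [Finite V] (hD : D.IsLinConn 2 Vs)
    (hnt₁ : ¬ IsTrivialComp (Vs 1)) (hnt₂ : ¬ IsTrivialComp (Vs 2))
    (hκ₁ : D.IsImprimIndex (Vs 1) (κ 1)) (hκ₂ : D.IsImprimIndex (Vs 2) (κ 2))
    (hu₁ : D.IsImprimLabelling (Vs 1) (u 1)) (hu₂ : D.IsImprimLabelling (Vs 2) (u 2)) :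
    ∀ᶠ m : ℕ in atTop, ∀ x ∈ Vs 1, ∀ z ∈ Vs 2,
      BAdj D Vs u 1 (u 1 x) (u 2 z - m) → D.HasWalk m x z := by
  have hS₁ := hD.strong 1 le_rfl one_le_two
  have hS₂ := hD.strong 2 one_le_two le_rfl
  obtain ⟨x₀, hx₀⟩ := hD.nonempty 1 le_rfl one_le_two
  obtain ⟨y₀, hy₀⟩ := hD.nonempty 2 one_le_two le_rfl
  have : NeZero (κ 1 * κ 2) :=
    ⟨(Nat.mul_pos (hκ₁.pos hS₁ hnt₁ hx₀) (hκ₂.pos hS₂ hnt₂ hy₀)).ne'⟩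
  obtain ⟨M₁, hM₁⟩ := eventually_atTop.1 (hu₁.eventually_hasWalkIn hS₁ hκ₁)
  obtain ⟨M₂, hM₂⟩ := eventually_atTop.1 (hu₂.eventually_hasWalkIn hS₂ hκ₂)
  refine eventually_atTop.2 ⟨M₁ + κ 1 * κ 2 + M₂ + 1, ?_⟩
  rintro m hm x hx z hz ⟨-, -, a, ⟨x', hx', y', hy', hadj, rfl, rfl⟩, hxa, hza⟩
  -- the crossing arc is taken after `s` steps, where `s ≡ -(1 + a)` modulo both indices
  obtain ⟨s, hs, hsL, hcast⟩ := exists_natCast_eq_intCast (κ 1 * κ 2) M₁ (-(1 + a))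
  obtain ⟨r, rfl⟩ : ∃ r, m = s + r + 1 := ⟨m - s - 1, by omega⟩
  refine (hD.hasWalk_iff_of_mem_one_of_mem_two hx hz).2
    ⟨s, r, x', y', rfl, hM₁ s hs x hx x' hx' ?_, hadj, hy', hM₂ r (by omega) y' hy' z hz ?_⟩
  · rw [hcast (κ 1) (dvd_mul_right _ _), hxa]
    push_cast
    ring
  · have hs₂ := hcast (κ 2) (dvd_mul_left _ _)
    push_cast at hza hs₂
    linear_combination hza + hs₂

lemma eventually_hasWalk_of_inI [Finite V] (hD : D.IsLinConn 2 Vs)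
    (htriv : IsTrivialComp (Vs 1)) (hκ₂ : D.IsImprimIndex (Vs 2) (κ 2))
    (hu₂ : D.IsImprimLabelling (Vs 2) (u 2)) :
    ∀ᶠ m : ℕ in atTop, ∀ x ∈ Vs 1, ∀ z ∈ Vs 2,
      (∃ l, InI D Vs u 1 (u 1 x) l ∧ u 2 z - m = l - 1) → D.HasWalk m x z := by
  obtain ⟨M, hM⟩ :=
    eventually_atTop.1 (hu₂.eventually_hasWalkIn (hD.strong 2 one_le_two le_rfl) hκ₂)
  refine eventually_atTop.2 ⟨M + 1, ?_⟩
  rintro m hm x hx z hz ⟨-, ⟨x', hx', y', hy', hadj, -, rfl⟩, hzl⟩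
  obtain rfl := htriv.eq_of_mem hx hx'
  obtain ⟨r, rfl⟩ : ∃ r, m = 0 + r + 1 := ⟨m - 1, by omega⟩
  refine (hD.hasWalk_iff_of_mem_one_of_mem_two hx hz).2 ⟨0, r, x, y', rfl,
    hasWalkIn_zero_iff.2 ⟨hx, rfl⟩, hadj, hy', hM r (by omega) y' hy' z hz ?_⟩
  push_cast at hzl
  linear_combination hzl

end Crossing

end IsLinConn

/-- The bipartite graph `B_D` of a digraph with two strong components: `B_{1,2}` when `D_1` is
nontrivial, and the shifted arc relation `I(D_{1,2})` when `D_1` is a single vertex. -/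
def BDAdj (D : Digraph' V) (Vs : ℕ → Set V) {κ : ℕ → ℕ} (u : ∀ i : ℕ, V → ZMod (κ i))
    (a : ZMod (κ 1)) (b : ZMod (κ 2)) : Prop :=
  (¬ IsTrivialComp (Vs 1) ∧ BAdj D Vs u 1 a b) ∨
    (IsTrivialComp (Vs 1) ∧ ∃ l : ZMod (κ 2), InI D Vs u 1 a l ∧ b = l - 1)

lemma IsLinConn.eventually_hasWalk_iff_bDAdj [Finite V] {Vs : ℕ → Set V} {κ : ℕ → ℕ}
    {u : ∀ i : ℕ, V → ZMod (κ i)} (hD : D.IsLinConn 2 Vs) (hnt₂ : ¬ IsTrivialComp (Vs 2))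
    (hκ₁ : ¬ IsTrivialComp (Vs 1) → D.IsImprimIndex (Vs 1) (κ 1))
    (hκ₂ : D.IsImprimIndex (Vs 2) (κ 2))
    (hu₁ : D.IsImprimLabelling (Vs 1) (u 1)) (hu₂ : D.IsImprimLabelling (Vs 2) (u 2)) :
    ∀ᶠ m : ℕ in atTop, ∀ x ∈ Vs 1, ∀ z ∈ Vs 2,
      D.HasWalk m x z ↔ BDAdj D Vs u (u 1 x) (u 2 z - m) := by
  by_cases htriv : IsTrivialComp (Vs 1)
  · filter_upwards [hD.eventually_hasWalk_of_inI htriv hκ₂ hu₂] with m hm x hx z hz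
    simp only [BDAdj, htriv, not_true_eq_false, false_and, true_and, false_or]
    exact ⟨hD.inI_of_hasWalk htriv hu₂ hx hz, hm x hx z hz⟩
  · filter_upwards [hD.eventually_hasWalk_of_bAdj htriv hnt₂ (hκ₁ htriv) hκ₂ hu₁ hu₂]
      with m hm x hx z hz
    simp only [BDAdj, htriv, not_false_eq_true, true_and, false_and, or_false]
    exact ⟨hD.bAdj_of_hasWalk hu₁ hu₂ hx hz, hm x hx z hz⟩

section CompGraph

variable {x' y' : V} {Vs : ℕ → Set V} {κ₁ κ₂ : ℕ} {u₁ : V → ZMod κ₁} {u₂ : V → ZMod κ₂}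
  {R : ZMod κ₁ → ZMod κ₂ → Prop}

lemma compGraph_adj_of_mem_two_iff
    (hA : ∀ y ∈ Vs 2, ∀ z, D.HasWalk m y z ↔ z ∈ Vs 2 ∧ u₂ z = u₂ y + m)
    (hsurj₂ : ∀ c, ∃ w ∈ Vs 2, u₂ w = c) (hy : y ∈ Vs 2) (hy' : y' ∈ Vs 2) (hne : y ≠ y') :
    (D.compGraph m).Adj y y' ↔ u₂ y = u₂ y' := by
  rw [compGraph_adj_iff, and_iff_right hne]
  constructor
  · rintro ⟨w, hyw, hy'w⟩
    exact add_right_cancel (((hA y hy w).1 hyw).2.symm.trans ((hA y' hy' w).1 hy'w).2)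
  · intro h
    obtain ⟨w, hw, hwl⟩ := hsurj₂ (u₂ y + m)
    exact ⟨w, (hA y hy w).2 ⟨hw, hwl⟩, (hA y' hy' w).2 ⟨hw, h ▸ hwl⟩⟩

lemma compGraph_adj_of_mem_one_of_mem_two_iff
    (hA : ∀ y ∈ Vs 2, ∀ z, D.HasWalk m y z ↔ z ∈ Vs 2 ∧ u₂ z = u₂ y + m)
    (hC : ∀ x ∈ Vs 1, ∀ z ∈ Vs 2, D.HasWalk m x z ↔ R (u₁ x) (u₂ z - m))
    (hsurj₂ : ∀ c, ∃ w ∈ Vs 2, u₂ w = c) (hx : x ∈ Vs 1) (hy : y ∈ Vs 2) (hne : x ≠ y) :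
    (D.compGraph m).Adj x y ↔ R (u₁ x) (u₂ y) := by
  rw [compGraph_adj_iff, and_iff_right hne]
  constructor
  · rintro ⟨w, hxw, hyw⟩
    obtain ⟨hw, hwl⟩ := (hA y hy w).1 hyw
    simpa [hwl] using (hC x hx w hw).1 hxw
  · intro h
    obtain ⟨w, hw, hwl⟩ := hsurj₂ (u₂ y + m)
    exact ⟨w, (hC x hx w hw).2 (by simpa [hwl] using h), (hA y hy w).2 ⟨hw, hwl⟩⟩

lemma compGraph_adj_of_mem_one_iff (hcover : ∀ v, v ∈ Vs 1 ∨ v ∈ Vs 2)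
    (hB : ∀ x ∈ Vs 1, ∀ z ∈ Vs 1, D.HasWalk m x z ↔ u₁ z = u₁ x + m)
    (hC : ∀ x ∈ Vs 1, ∀ z ∈ Vs 2, D.HasWalk m x z ↔ R (u₁ x) (u₂ z - m))
    (hsurj₁ : ∀ c, ∃ w ∈ Vs 1, u₁ w = c) (hsurj₂ : ∀ c, ∃ w ∈ Vs 2, u₂ w = c)
    (hx : x ∈ Vs 1) (hx' : x' ∈ Vs 1) (hne : x ≠ x') :
    (D.compGraph m).Adj x x' ↔ u₁ x = u₁ x' ∨ ∃ z, R (u₁ x) z ∧ R (u₁ x') z := by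
  rw [compGraph_adj_iff, and_iff_right hne]
  constructor
  · rintro ⟨w, hxw, hx'w⟩
    rcases hcover w with hw | hw
    · exact Or.inl (add_right_cancel (((hB x hx w hw).1 hxw).symm.trans ((hB x' hx' w hw).1 hx'w)))
    · exact Or.inr ⟨u₂ w - m, (hC x hx w hw).1 hxw, (hC x' hx' w hw).1 hx'w⟩
  · rintro (h | ⟨c, hc, hc'⟩)
    · obtain ⟨w, hw, hwl⟩ := hsurj₁ (u₁ x + m)
      exact ⟨w, (hB x hx w hw).2 hwl, (hB x' hx' w hw).2 (h ▸ hwl)⟩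
    · obtain ⟨w, hw, hwl⟩ := hsurj₂ (c + m)
      have hc_eq : u₂ w - m = c := by rw [hwl, add_sub_cancel_right]
      exact ⟨w, (hC x hx w hw).2 (hc_eq ▸ hc), (hC x' hx' w hw).2 (hc_eq ▸ hc')⟩

end CompGraph

end Digraph'

open Digraph' in
theorem stmt14_general {V : Type*} [Fintype V] (D : Digraph' V) (Vset : ℕ → Set V)
    (hD : D.IsLinConn 2 Vset)
    (h2 : ¬ IsTrivialComp (Vset 2))
    (κ : ℕ → ℕ) (u : ∀ i : ℕ, V → ZMod (κ i))
    (hκ : ∀ i, 1 ≤ i → i ≤ 2 → ¬ IsTrivialComp (Vset i) →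
      IsImprimIndex D (Vset i) (κ i))
    (hu : ∀ i, 1 ≤ i → i ≤ 2 → IsImprimLabelling D (Vset i) (u i))
    (G : SimpleGraph V) (hG : D.CompConvergesTo G) :
    let BD : ZMod (κ 1) → ZMod (κ 2) → Prop := fun a b =>
      (¬ IsTrivialComp (Vset 1) ∧ BAdj D Vset u 1 a b) ∨
      (IsTrivialComp (Vset 1) ∧ ∃ l : ZMod (κ 2), InI D Vset u 1 a l ∧ b = l - 1)
    (∀ x ∈ Vset 1, ∀ x' ∈ Vset 1, x ≠ x' →
       (G.Adj x x' ↔ (u 1 x = u 1 x' ∨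
          ∃ z : ZMod (κ 2), BD (u 1 x) z ∧ BD (u 1 x') z))) ∧
    (∀ x ∈ Vset 1, ∀ y ∈ Vset 2, (G.Adj x y ↔ BD (u 1 x) (u 2 y))) ∧
    (∀ y ∈ Vset 2, ∀ y' ∈ Vset 2, y ≠ y' → (G.Adj y y' ↔ u 2 y = u 2 y')) := by
  intro BD
  have hu₁ := hu 1 le_rfl one_le_two
  have hu₂ := hu 2 one_le_two le_rfl
  have hκ₁ := hκ 1 le_rfl one_le_two
  have hκ₂ := hκ 2 one_le_two le_rfl h2
  obtain ⟨y₀, hy₀⟩ := hD.nonempty 2 one_le_two le_rfl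
  have hsurj₂ := hu₂.exists_eq (hD.strong 2 one_le_two le_rfl) h2 hκ₂ hy₀
  obtain ⟨m, rfl, hA, hB, hC⟩ := (hG.eventually_compGraph_eq.and <|
    (hD.eventually_hasWalk_two_iff hκ₂ hu₂).and <|
    (eventually_imp_distrib_left.2 fun hnt => hD.eventually_hasWalk_one_iff (hκ₁ hnt) hu₁).and
    (hD.eventually_hasWalk_iff_bDAdj h2 hκ₁ hκ₂ hu₁ hu₂)).exists
  refine ⟨fun x hx x' hx' hne => ?_, fun x hx y hy =>
      compGraph_adj_of_mem_one_of_mem_two_iff hA hC hsurj₂ hx hy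
        fun h => hD.not_mem_two_of_mem_one hx (h ▸ hy),
    fun y hy y' hy' hne => compGraph_adj_of_mem_two_iff hA hsurj₂ hy hy' hne⟩
  have hnt : ¬ IsTrivialComp (Vset 1) := fun htriv => hne (htriv.eq_of_mem hx hx')
  exact compGraph_adj_of_mem_one_iff hD.mem_one_or_mem_two (hB hnt) hC
    (hu₁.exists_eq (hD.strong 1 le_rfl one_le_two) hnt (hκ₁ hnt) hx) hsurj₂ hx hx' hne

open Digraph' in
/-- description of the limit of `{C(D^m)}` for a linearly connected
digraph with two strong components, the second one nontrivial, via the bipartite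
graph `B_D`. -/
theorem stmt14 {V : Type*} [Fintype V] (D : Digraph' V) (Vset : ℕ → Set V)
    (hD : D.IsLinConn 2 Vset)
    (h2 : ¬ IsTrivialComp (Vset 2))
    (κ : ℕ → ℕ) (u : ∀ i : ℕ, V → ZMod (κ i))
    (hκ : ∀ i, 1 ≤ i → i ≤ 2 → ¬ IsTrivialComp (Vset i) →
      IsImprimIndex D (Vset i) (κ i))
    (hκtriv : IsTrivialComp (Vset 1) → κ 1 = 1)
    (hu : ∀ i, 1 ≤ i → i ≤ 2 → IsImprimLabelling D (Vset i) (u i))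
    (G : SimpleGraph V) (hG : D.CompConvergesTo G) :
    let BD : ZMod (κ 1) → ZMod (κ 2) → Prop := fun a b =>
      (¬ IsTrivialComp (Vset 1) ∧ BAdj D Vset u 1 a b) ∨
      (IsTrivialComp (Vset 1) ∧ ∃ l : ZMod (κ 2), InI D Vset u 1 a l ∧ b = l - 1)
    (∀ x ∈ Vset 1, ∀ x' ∈ Vset 1, x ≠ x' →
       (G.Adj x x' ↔ (u 1 x = u 1 x' ∨
          ∃ z : ZMod (κ 2), BD (u 1 x) z ∧ BD (u 1 x') z))) ∧
    (∀ x ∈ Vset 1, ∀ y ∈ Vset 2, (G.Adj x y ↔ BD (u 1 x) (u 2 y))) ∧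
    (∀ y ∈ Vset 2, ∀ y' ∈ Vset 2, y ≠ y' → (G.Adj y y' ↔ u 2 y = u 2 y')) :=
  stmt14_general D Vset hD h2 κ u hκ hu G hG
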